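/- arXiv:1408.1074 — 3 statements merged into one kernel-verified Lean document; each statement's English description precedes it below -/
import Mathlib

section
/- For every w ∈ Ω, as z → w with z ∈ Ω \ {w}, the quantity |f_w(z)/(z − w)| tends to h(w) = |exp(ℓ(w)) · ℓ′(w) / (exp(ℓ(w)) − exp(conj(ℓ(w))))|, where ℓ′(w) = 4/(1 − w²). -/
open Complex Filter

/-- The open upper half of the unit disk. -/
def upperHalfDisk : Set ℂ := {z : ℂ | 0 < z.im ∧ ‖z‖ < 1}

/-- `ℓ(z) = Log((1+z)²/(1−z)²)` with the principal branch of the logarithm. -/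
noncomputable def ell (z : ℂ) : ℂ := Complex.log ((1 + z) ^ 2 / (1 - z) ^ 2)

/-- The map `f_w(z) = (exp(ℓ(z)) − exp(ℓ(w)))/(exp(ℓ(z)) − exp(conj(ℓ(w))))`. -/
noncomputable def fMap (w z : ℂ) : ℂ :=
  (Complex.exp (ell z) - Complex.exp (ell w)) /
    (Complex.exp (ell z) - Complex.exp ((starRingEnd ℂ) (ell w)))

/-- `h(w) = |exp(ℓ(w))·ℓ′(w)/(exp(ℓ(w)) − exp(conj(ℓ(w))))|` where `ℓ′(w) = 4/(1 − w²)`. -/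
noncomputable def hFun (w : ℂ) : ℝ :=
  ‖(Complex.exp (ell w) * (4 / (1 - w ^ 2)) /
    (Complex.exp (ell w) - Complex.exp ((starRingEnd ℂ) (ell w))))‖

/-!
Off `±1` we have `exp (ℓ z) = ((1 + z) / (1 - z))²`, and the Cayley map `z ↦ (1 + z) / (1 - z)`
sends `Ω` into the open first quadrant, so `exp (ℓ w)` lies in the open upper half-plane. Hence
`ℓ` is holomorphic at `w` with `ℓ′(w) = 4 / (1 - w²)`, and `exp (ℓ w) ≠ exp (conj (ℓ w))`.
Writing `g = exp ∘ ℓ` and `c = exp (conj (ℓ w))`, the quotient `f_w(z) / (z - w)` is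
`slope g w z / (g z - c)`, which tends to `g′(w) / (g w - c)`.
-/

theorem HasDerivAt.tendsto_sub_div_sub_div_sub {𝕜 : Type*} [NontriviallyNormedField 𝕜]
    {g : 𝕜 → 𝕜} {d c w : 𝕜} (hg : HasDerivAt g d w) (hc : g w ≠ c) :
    Tendsto (fun z => (g z - g w) / (g z - c) / (z - w)) (nhdsWithin w {w}ᶜ)
      (nhds (d / (g w - c))) := by
  have hslope := hasDerivAt_iff_tendsto_slope.mp hg
  have hden : Tendsto (fun z => g z - c) (nhdsWithin w {w}ᶜ) (nhds (g w - c)) :=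
    (hg.continuousAt.tendsto.mono_left nhdsWithin_le_nhds).sub_const c
  refine (hslope.div hden (sub_ne_zero.mpr hc)).congr fun z => ?_
  rw [Pi.div_apply, slope_def_field, div_right_comm]

theorem Complex.exp_log_ne_exp_conj_log {x : ℂ} (hx : x.im ≠ 0) :
    exp (log x) ≠ exp ((starRingEnd ℂ) (log x)) := by
  have hx0 : x ≠ 0 := fun h => hx (by simp [h])
  rw [exp_conj, exp_log hx0]
  exact fun h => hx (conj_eq_iff_im.mp h.symm)

theorem re_one_add_div_one_sub_pos {w : ℂ} (hw : ‖w‖ < 1) : 0 < ((1 + w) / (1 - w)).re := by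
  have hw1 : 1 - w ≠ 0 := fun h => by simp [← sub_eq_zero.mp h] at hw
  have hnormSq : normSq w < 1 := by
    rw [normSq_eq_norm_sq]; nlinarith [norm_nonneg w]
  have hnum : (1 + w).re * (1 - w).re + (1 + w).im * (1 - w).im = 1 - normSq w := by
    simp only [add_re, one_re, sub_re, add_im, one_im, zero_add, sub_im, zero_sub, mul_neg,
      normSq_apply]
    ring
  rw [div_re, ← add_div, hnum]
  exact div_pos (by linarith) (normSq_pos.mpr hw1)

theorem im_one_add_div_one_sub_pos {w : ℂ} (hw : 0 < w.im) : 0 < ((1 + w) / (1 - w)).im := by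
  have hw1 : 1 - w ≠ 0 := fun h => by simp [← sub_eq_zero.mp h] at hw
  have hnum : (1 + w).im * (1 - w).re - (1 + w).re * (1 - w).im = 2 * w.im := by
    simp only [add_im, one_im, zero_add, sub_re, one_re, add_re, sub_im, zero_sub, mul_neg,
      sub_neg_eq_add]
    ring
  rw [div_im, div_sub_div_same, hnum]
  exact div_pos (by linarith) (normSq_pos.mpr hw1)

theorem im_sq_div_sq_pos {w : ℂ} (hw : w ∈ upperHalfDisk) :
    0 < ((1 + w) ^ 2 / (1 - w) ^ 2).im := by
  rw [← div_pow, sq, mul_im]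
  have := re_one_add_div_one_sub_pos hw.2
  have := im_one_add_div_one_sub_pos hw.1
  positivity

theorem hasDerivAt_ell {w : ℂ} (hw : (1 + w) ^ 2 / (1 - w) ^ 2 ∈ slitPlane) :
    HasDerivAt ell (4 / (1 - w ^ 2)) w := by
  have hG := slitPlane_ne_zero hw
  have hsub : 1 - w ≠ 0 := fun h => hG (by simp [h])
  have hnum : HasDerivAt (fun z : ℂ => (1 + z) ^ 2) (2 * (1 + w)) w := by
    simpa using ((hasDerivAt_id w).const_add 1).fun_pow 2
  have hden : HasDerivAt (fun z : ℂ => (1 - z) ^ 2) (-(2 * (1 - w))) w := by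
    simpa using ((hasDerivAt_id w).const_sub 1).fun_pow 2
  refine ((hnum.fun_div hden (pow_ne_zero 2 hsub)).clog hw).congr_deriv ?_
  have h1w2 : 1 - w ^ 2 = (1 - w) * (1 + w) := by ring
  rw [h1w2]
  field_simp
  ring

/-- for `w ∈ Ω`, `|f_w(z)/(z − w)| → h(w)` as `z → w` within `Ω \ {w}`. -/
theorem stmt_3 :
    ∀ w ∈ upperHalfDisk,
      Tendsto (fun z : ℂ => ‖(fMap w z / (z - w))‖)
        (nhdsWithin w (upperHalfDisk \ {w})) (nhds (hFun w)) := by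
  intro w hw
  have him := im_sq_div_sq_pos hw
  have hderiv : HasDerivAt (fun z => exp (ell z)) (exp (ell w) * (4 / (1 - w ^ 2))) w :=
    (hasDerivAt_ell (mem_slitPlane_iff.mpr (Or.inr him.ne'))).cexp
  have hlim := hderiv.tendsto_sub_div_sub_div_sub (exp_log_ne_exp_conj_log him.ne')
  exact (hlim.mono_left (nhdsWithin_mono w (Set.sdiff_subset_compl _ _))).norm
end

section
/- For every real y with 0 < y < 1, one has |exp(ℓ(iy)) · ℓ′(iy) / (exp(ℓ(iy)) − exp(conj(ℓ(iy))))| = (1 + y²)/(2y(1 − y²)), where ℓ′(z) = 4/(1 − z²). -/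
open Complex

/-!
Whatever the branch, `exp (ℓ z) = w` with `w = ((1 + z) / (1 - z)) ^ 2`, and `exp (conj (ℓ z)) = conj w`,
so the quotient is `w ℓ′(z) / (2 i Im w)`. At `z = i y` the point `(1 + i y) / (1 - i y)` is the unit
complex number `((1 - y²) + 2 i y) / (1 + y²)`; hence `|w| = 1`, `Im w = 4 y (1 - y²) / (1 + y²)²`,
and `ℓ′(i y) = 4 / (1 + y²)`.
-/

open ComplexConjugate

lemma exp_ell {z : ℂ} (h₁ : 1 + z ≠ 0) (h₂ : 1 - z ≠ 0) :
    exp (ell z) = ((1 + z) / (1 - z)) ^ 2 := by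
  rw [ell, exp_log (by positivity), div_pow]

lemma norm_mul_div_sub_conj (w d : ℂ) :
    ‖w * d / (w - conj w)‖ = ‖w‖ * ‖d‖ / (2 * |w.im|) := by
  rw [sub_conj, norm_div, norm_mul, norm_mul, norm_I, mul_one, norm_real, Real.norm_eq_abs,
    abs_mul, abs_two]

section CayleyImaginaryAxis

variable (y : ℝ)

lemma one_add_ofReal_mul_I_ne_zero : 1 + y * I ≠ 0 := by
  intro h
  simpa using congrArg re h

lemma one_sub_ofReal_mul_I_ne_zero : 1 - y * I ≠ 0 := by
  intro h
  simpa using congrArg re h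

lemma one_add_ofReal_mul_I_div_one_sub :
    (1 + y * I) / (1 - y * I) =
      ((1 - y ^ 2) / (1 + y ^ 2) : ℝ) + ((2 * y / (1 + y ^ 2) : ℝ)) * I := by
  have h : (1 + (y : ℂ) ^ 2) ≠ 0 := by exact_mod_cast (by positivity : (1 + y ^ 2 : ℝ) ≠ 0)
  rw [div_eq_iff (one_sub_ofReal_mul_I_ne_zero y)]
  push_cast
  field_simp
  ring_nf
  rw [I_sq]
  ring

lemma norm_one_add_ofReal_mul_I_div_one_sub : ‖(1 + y * I) / (1 - y * I)‖ = 1 := by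
  have hconj : 1 - y * I = conj (1 + y * I) := by simp [sub_eq_add_neg]
  rw [hconj, norm_div, norm_conj, div_self]
  simpa using one_add_ofReal_mul_I_ne_zero y

lemma im_sq_one_add_ofReal_mul_I_div_one_sub :
    (((1 + y * I) / (1 - y * I)) ^ 2).im = 4 * y * (1 - y ^ 2) / (1 + y ^ 2) ^ 2 := by
  rw [one_add_ofReal_mul_I_div_one_sub, sq, mul_im]
  simp only [add_re, add_im, mul_re, mul_im, ofReal_re, ofReal_im, I_re, I_im]
  field_simp
  ring

end CayleyImaginaryAxis

/-- for `0 < y < 1`, with `ℓ′(z) = 4/(1−z²)`,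
`|exp(ℓ(iy))·ℓ′(iy)/(exp(ℓ(iy)) − exp(conj(ℓ(iy))))| = (1+y²)/(2y(1−y²))`. -/
theorem stmt_4 (y : ℝ) (hy : y ∈ Set.Ioo (0 : ℝ) 1) :
    ‖(Complex.exp (ell (y * I)) * (4 / (1 - (y * I) ^ 2)) /
        (Complex.exp (ell (y * I)) - Complex.exp ((starRingEnd ℂ) (ell (y * I)))))‖ =
      (1 + y ^ 2) / (2 * y * (1 - y ^ 2)) := by
  obtain ⟨hy0, hy1⟩ := hy
  have hy2 : 0 < 1 - y ^ 2 := by nlinarith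
  have hderiv : 4 / (1 - (y * I) ^ 2) = ((4 / (1 + y ^ 2) : ℝ) : ℂ) := by
    push_cast
    rw [mul_pow, I_sq]
    ring
  have him_pos : 0 < 4 * y * (1 - y ^ 2) / (1 + y ^ 2) ^ 2 :=
    div_pos (mul_pos (by positivity) hy2) (by positivity)
  rw [exp_conj, exp_ell (one_add_ofReal_mul_I_ne_zero y) (one_sub_ofReal_mul_I_ne_zero y),
    norm_mul_div_sub_conj, norm_pow, norm_one_add_ofReal_mul_I_div_one_sub, hderiv, norm_real,
    im_sq_one_add_ofReal_mul_I_div_one_sub, Real.norm_of_nonneg (by positivity),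
    abs_of_pos him_pos]
  field_simp
end

section
/- For every r with 0 < r < 1, the circle average (1/(2π)) ∫₀^{2π} g(r·e^{it}) dt equals 2i/(3√3), where g is defined via m(z) = ((√3/2 + i/2) + 1/z)/((−√3/2 + i/2) + 1/z) and g(z) = (1 + 2·m(z)^{3/2} + m(z)³)/(m(z)³ − 1), using principal branch complex powers. -/
open Complex

/-- `m(z) = ((√3/2 + i/2) + 1/z)/((−√3/2 + i/2) + 1/z)`. -/
noncomputable def mMap (z : ℂ) : ℂ :=
  (((Real.sqrt 3 / 2 : ℝ) : ℂ) + I / 2 + 1 / z) /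
    (-((Real.sqrt 3 / 2 : ℝ) : ℂ) + I / 2 + 1 / z)

/-- `g(z) = (1 + 2m(z)^{3/2} + m(z)³)/(m(z)³ − 1)` with the principal branch power. -/
noncomputable def gMap (z : ℂ) : ℂ :=
  (1 + 2 * mMap z ^ ((3 : ℂ) / 2) + mMap z ^ (3 : ℕ)) / (mMap z ^ (3 : ℕ) - 1)

/-!
Off `0`, `m = M` with `M z = (1 + α z)/(1 + β z)`, `α = (√3 + i)/2`, `β = (-√3 + i)/2`. The Möbius
map `M` sends the unit disk into the half-plane `Re (ᾱ w) > 0`, so `u = M^{1/2}` is holomorphic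
there with `Re u > 0`, and `m^{3/2} = u³`. From `u³ - 1 = (u - 1)(u² + u + 1)` and
`u - 1 = √3 z / ((1 + β z)(u + 1))`, the function `z g(z) = z (u³ + 1)/(u³ - 1)` extends
holomorphically to the disk as `z + 2(1 + β z)(u + 1) / (√3 (u² + u + 1))`. By Cauchy's formula
for the derivative, the circle average of `g = (z g) / z` is the derivative of `z g` at `0`.
-/

open Metric ComplexConjugate

theorem circleAverage_inv_sub_smul_eq_deriv {E : Type*} [NormedAddCommGroup E] [NormedSpace ℂ E]
    [CompleteSpace E] {U : Set ℂ} (hU : IsOpen U) {c : ℂ} {R : ℝ} (hR : 0 < R)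
    (hc : closedBall c R ⊆ U) {f : ℂ → E} (hf : DifferentiableOn ℂ f U) :
    Real.circleAverage (fun z ↦ (z - c)⁻¹ • f z) c R = deriv f c := by
  rw [Real.circleAverage_eq_circleIntegral hR.ne',
    ← two_pi_I_inv_smul_circleIntegral_sub_sq_inv_smul_of_differentiable hU hc hf
      (mem_ball_self hR)]
  congr 1
  refine circleIntegral.integral_congr hR.le fun z _ ↦ ?_
  simp only [smul_smul, sq, mul_inv]

theorem re_cpow_inv_two_pos {w : ℂ} (hw : w ∈ slitPlane) : 0 < (w ^ (2⁻¹ : ℂ)).re := by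
  rw [cpow_def_of_ne_zero (slitPlane_ne_zero hw), exp_re]
  have him : (log w * 2⁻¹).im = arg w / 2 := by simp [log_im, div_eq_mul_inv]
  have harg := (arg_le_pi w).lt_of_ne (mem_slitPlane_iff_arg.mp hw).1
  refine mul_pos (Real.exp_pos _) (Real.cos_pos_of_mem_Ioo ⟨?_, ?_⟩) <;>
    linarith [neg_pi_lt_arg w]

theorem sq_add_self_add_one_ne_zero {u : ℂ} (hu : 0 < u.re) : u ^ 2 + u + 1 ≠ 0 := by
  intro h
  have hre := congrArg re h
  have him := congrArg im h
  simp only [sq, add_re, add_im, mul_re, mul_im, one_re, one_im, zero_re, zero_im] at hre him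
  have hy : u.im = 0 := by nlinarith
  rw [hy] at hre
  nlinarith

theorem add_one_sq_div_sq_sub_one {K : Type*} [Field K] (s : K) :
    (1 + 2 * s + s ^ 2) / (s ^ 2 - 1) = (s + 1) / (s - 1) := by
  rcases eq_or_ne (s + 1) 0 with h | h
  · rw [eq_neg_of_add_eq_zero_left h]; norm_num
  · rw [← mul_div_mul_left (s + 1) (s - 1) h]; ring_nf

namespace UpperHalfDisk

noncomputable def α : ℂ := (√3 + I) / 2

noncomputable def β : ℂ := (-√3 + I) / 2

noncomputable def mob (z : ℂ) : ℂ := (1 + α * z) / (1 + β * z)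

noncomputable def sqrtMob (z : ℂ) : ℂ := mob z ^ (2⁻¹ : ℂ)

noncomputable def zMulGMap (z : ℂ) : ℂ :=
  z + 2 * (1 + β * z) * (sqrtMob z + 1) / (√3 * (sqrtMob z ^ 2 + sqrtMob z + 1))

theorem sqrt_three_sq : (√3 : ℂ) ^ 2 = 3 := by
  norm_cast; exact Real.sq_sqrt (by norm_num)

theorem conj_α : conj α = (√3 - I) / 2 := by
  rw [α, map_div₀, map_add, conj_ofReal, conj_I, map_ofNat, sub_eq_add_neg]

theorem conj_α_mul_α : conj α * α = 1 := by
  rw [conj_α, α]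
  linear_combination sqrt_three_sq / 4 - I_sq / 4

theorem β_eq_neg_conj_α : β = -conj α := by
  rw [conj_α, β]; ring

theorem norm_β : ‖β‖ = 1 := by
  have h : (normSq α : ℂ) = 1 := by rw [← mul_conj, mul_comm, conj_α_mul_α]
  rw [β_eq_neg_conj_α, norm_neg, norm_conj, norm_def, (by exact_mod_cast h : normSq α = 1),
    Real.sqrt_one]

theorem one_add_β_mul_ne_zero {z : ℂ} (hz : ‖z‖ < 1) : 1 + β * z ≠ 0 := by
  intro h
  have : ‖β * z‖ = 1 := by rw [eq_neg_of_add_eq_zero_right h, norm_neg, norm_one]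
  rw [norm_mul, norm_β, one_mul] at this
  exact hz.ne this

theorem re_conj_α_mul_mob_pos {z : ℂ} (hz : ‖z‖ < 1) : 0 < (conj α * mob z).re := by
  have key :
      conj α * (1 + α * z) * conj (1 + β * z) = conj α + (z - conj z) - α * normSq z := by
    simp only [map_add, map_one, map_mul, β_eq_neg_conj_α, map_neg, conj_conj, ← mul_conj]
    linear_combination (z - α * z * conj z - conj z) * conj_α_mul_α
  have hre : (conj α + (z - conj z) - α * normSq z).re = √3 / 2 * (1 - normSq z) := by
    rw [conj_α]
    simp only [α, sub_re, add_re, div_ofNat_re, ofReal_re, I_re, sub_zero, conj_re, sub_self,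
      add_zero, mul_re, div_ofNat_im, add_im, ofReal_im, I_im, zero_add, mul_zero]
    ring
  rw [mob, div_eq_mul_inv, inv_def, ← mul_assoc, ← mul_assoc, key, re_mul_ofReal, hre]
  have hq : 0 < normSq (1 + β * z) := normSq_pos.mpr (one_add_β_mul_ne_zero hz)
  have hz1 : 0 < 1 - normSq z := by
    rw [normSq_eq_norm_sq]; nlinarith [norm_nonneg z]
  have : (0 : ℝ) < √3 := by positivity
  positivity

theorem mob_mem_slitPlane {z : ℂ} (hz : ‖z‖ < 1) : mob z ∈ slitPlane := by
  have h := re_conj_α_mul_mob_pos hz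
  simp only [conj_α, mul_re, div_ofNat_re, sub_re, ofReal_re, I_re, sub_zero, div_ofNat_im,
    sub_im, ofReal_im, I_im, zero_sub, sub_pos] at h
  rw [mem_slitPlane_iff]
  by_contra! hc
  rw [hc.2] at h
  nlinarith [hc.1, Real.sqrt_nonneg 3]

theorem re_sqrtMob_pos {z : ℂ} (hz : ‖z‖ < 1) : 0 < (sqrtMob z).re :=
  re_cpow_inv_two_pos (mob_mem_slitPlane hz)

theorem sqrtMob_sq (z : ℂ) : sqrtMob z ^ 2 = mob z := by
  rw [sqrtMob, show (2⁻¹ : ℂ) = ((2 : ℕ) : ℂ)⁻¹ by norm_num, cpow_nat_inv_pow _ two_ne_zero]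

theorem mob_sub_one_mul {z : ℂ} (hz : ‖z‖ < 1) : (mob z - 1) * (1 + β * z) = √3 * z := by
  rw [mob, div_sub_one (one_add_β_mul_ne_zero hz), div_mul_cancel₀ _ (one_add_β_mul_ne_zero hz),
    α, β]
  ring

theorem mMap_eq_mob {z : ℂ} (hz : z ≠ 0) : mMap z = mob z := by
  have hA : ((√3 / 2 : ℝ) : ℂ) + I / 2 + 1 / z = (1 + α * z) / z := by
    rw [α]; push_cast; field_simp; ring
  have hB : -((√3 / 2 : ℝ) : ℂ) + I / 2 + 1 / z = (1 + β * z) / z := by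
    rw [β]; push_cast; field_simp; ring
  rw [mMap, hA, hB, div_div_div_cancel_right₀ hz, mob]

theorem mMap_cpow_three_halves {z : ℂ} (hz : z ≠ 0) :
    mMap z ^ ((3 : ℂ) / 2) = sqrtMob z ^ 3 := by
  rw [mMap_eq_mob hz, sqrtMob, ← cpow_nat_mul]
  norm_num

theorem mMap_pow_three {z : ℂ} (hz : z ≠ 0) : mMap z ^ 3 = (sqrtMob z ^ 3) ^ 2 := by
  rw [mMap_eq_mob hz, ← sqrtMob_sq]; ring

theorem zMulGMap_eq {z : ℂ} (hz0 : z ≠ 0) (hz : ‖z‖ < 1) : zMulGMap z = z * gMap z := by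
  rw [gMap, mMap_cpow_three_halves hz0, mMap_pow_three hz0, add_one_sq_div_sq_sub_one, zMulGMap]
  set u := sqrtMob z
  have hQ : u ^ 2 + u + 1 ≠ 0 := sq_add_self_add_one_ne_zero (re_sqrtMob_pos hz)
  have h3 : (√3 : ℂ) ≠ 0 := by norm_num
  have key : (u ^ 3 - 1) * ((1 + β * z) * (u + 1)) = √3 * z * (u ^ 2 + u + 1) := by
    rw [← mob_sub_one_mul hz, ← sqrtMob_sq]; ring
  have hs : u ^ 3 - 1 ≠ 0 := fun h ↦ by
    rw [h, zero_mul] at key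
    exact mul_ne_zero (mul_ne_zero h3 hz0) hQ key.symm
  rw [eq_comm, mul_div_assoc', div_eq_iff hs, add_div' _ _ _ (mul_ne_zero h3 hQ),
    div_mul_eq_mul_div, eq_div_iff (mul_ne_zero h3 hQ)]
  linear_combination -2 * key

theorem differentiableAt_mob {z : ℂ} (hz : ‖z‖ < 1) : DifferentiableAt ℂ mob z :=
  ((differentiableAt_id.const_mul α).const_add 1).div
    ((differentiableAt_id.const_mul β).const_add 1) (one_add_β_mul_ne_zero hz)

theorem differentiableOn_zMulGMap : DifferentiableOn ℂ zMulGMap (ball 0 1) := by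
  intro z hz
  rw [mem_ball_zero_iff] at hz
  have hu : DifferentiableAt ℂ sqrtMob z :=
    (differentiableAt_mob hz).cpow_const (mob_mem_slitPlane hz)
  have hQ := sq_add_self_add_one_ne_zero (re_sqrtMob_pos hz)
  have h3 : (√3 : ℂ) ≠ 0 := by norm_num
  refine DifferentiableAt.differentiableWithinAt ?_
  unfold zMulGMap
  fun_prop (disch := exact mul_ne_zero h3 hQ)

theorem mob_zero : mob 0 = 1 := by simp [mob]

theorem sqrtMob_zero : sqrtMob 0 = 1 := by simp [sqrtMob, mob_zero]

theorem hasDerivAt_mob_zero : HasDerivAt mob √3 0 := by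
  have h := (((hasDerivAt_id (0 : ℂ)).const_mul α).const_add 1).div
    (((hasDerivAt_id (0 : ℂ)).const_mul β).const_add 1) (by simp)
  refine h.congr_deriv ?_
  simp only [id_eq, mul_zero, add_zero, mul_one, one_pow, div_one]
  rw [α, β]
  ring

theorem hasDerivAt_sqrtMob_zero : HasDerivAt sqrtMob (√3 / 2) 0 := by
  have h := hasDerivAt_mob_zero.cpow_const (c := 2⁻¹) (by simp [mob_zero])
  refine h.congr_deriv ?_
  rw [mob_zero, one_cpow]
  ring

theorem hasDerivAt_zMulGMap_zero : HasDerivAt zMulGMap (2 / (3 * √3) * I) 0 := by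
  have hu := hasDerivAt_sqrtMob_zero
  have h := (hasDerivAt_id (0 : ℂ)).add
    ((((((hasDerivAt_id (0 : ℂ)).const_mul β).const_add 1).const_mul 2).mul (hu.add_const 1)).div
      ((((hu.pow 2).add hu).add_const 1).const_mul (√3 : ℂ)) (by norm_num [sqrtMob_zero]))
  refine h.congr_deriv ?_
  have h3 : (√3 : ℂ) ≠ 0 := by norm_num
  simp only [mul_one, sqrtMob_zero, id_eq, mul_zero, add_zero, Pi.add_apply, Pi.pow_apply,
    one_pow, Pi.mul_apply, Nat.cast_ofNat, Nat.add_one_sub_one]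
  field_simp
  rw [β]
  ring

end UpperHalfDisk

/-- for `0 < r < 1`, the circle average
`(1/(2π)) ∫₀^{2π} g(r e^{it}) dt` equals `2i/(3√3)`. -/
theorem stmt_7 (r : ℝ) (hr : r ∈ Set.Ioo (0 : ℝ) 1) :
    ((1 / (2 * Real.pi) : ℝ) : ℂ) *
        ∫ t in (0 : ℝ)..(2 * Real.pi), gMap ((r : ℂ) * Complex.exp (t * I)) =
      ((2 / (3 * Real.sqrt 3) : ℝ) : ℂ) * I := by
  obtain ⟨hr0, hr1⟩ := hr
  have hg : Set.EqOn gMap (fun z ↦ (z - 0)⁻¹ • UpperHalfDisk.zMulGMap z) (sphere 0 |r|) :=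
    fun z hz ↦ by
      rw [mem_sphere_zero_iff_norm, abs_of_pos hr0] at hz
      have hz0 : z ≠ 0 := norm_pos_iff.mp (hz ▸ hr0)
      simp [UpperHalfDisk.zMulGMap_eq hz0 (hz ▸ hr1), hz0]
  calc _ = Real.circleAverage gMap 0 r := by
        simp [Real.circleAverage_def, circleMap_zero, real_smul]
    _ = Real.circleAverage (fun z ↦ (z - 0)⁻¹ • UpperHalfDisk.zMulGMap z) 0 r :=
        Real.circleAverage_congr_sphere hg
    _ = deriv UpperHalfDisk.zMulGMap 0 :=
        circleAverage_inv_sub_smul_eq_deriv isOpen_ball hr0 (closedBall_subset_ball hr1)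
          UpperHalfDisk.differentiableOn_zMulGMap
    _ = _ := by
        rw [UpperHalfDisk.hasDerivAt_zMulGMap_zero.deriv]
        push_cast
        ring
end
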